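/- arXiv:1106.3931 — 2 statements merged into one kernel-verified Lean document; each statement's English description precedes it below -/
import Mathlib

section
/- Let λ ∈ ℂ with Re λ < 0, and let η, k, ν > 0 satisfy (|k+λ|² − ηkν)·Re λ − ην·Re(λ²) > 0. Then Re[λ·(1 − ην/(k+λ))⁻¹] > 0, provided k + λ − ην ≠ 0. -/
/-!
With `w = k + λ` and `c = ην`, the number in question is `λ w / (w - c)`, whose real part is
`Re (λ w (w̄ - c)) / |w - c|²`. Expanding, `Re (λ w (w̄ - c)) = |w|² Re λ - c (k Re λ + Re λ²)`,
which is exactly the left-hand side of (2.8).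
-/

open ComplexConjugate

namespace Complex

theorem re_div_eq_re_mul_conj_div_normSq (z u : ℂ) :
    (z / u).re = (z * conj u).re / normSq u := by
  rw [div_eq_mul_inv, inv_def, ← mul_assoc, re_mul_ofReal, div_eq_mul_inv]

theorem mul_inv_one_sub_div {w : ℂ} (lam c : ℂ) (hw : w ≠ 0) :
    lam * (1 - c / w)⁻¹ = lam * w / (w - c) := by
  rw [one_sub_div hw, inv_div, mul_div_assoc]

theorem re_mul_add_mul_conj_add_sub (lam : ℂ) (k c : ℝ) :
    (lam * (k + lam) * conj (k + lam - c)).re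
      = (‖(k : ℂ) + lam‖ ^ 2 - c * k) * lam.re - c * (lam ^ 2).re := by
  have hexpand : lam * (k + lam) * conj (k + lam - c)
      = ((‖(k : ℂ) + lam‖ ^ 2 : ℝ) : ℂ) * lam - c * (k * lam + lam ^ 2) := by
    rw [map_sub, conj_ofReal, mul_sub, mul_assoc, mul_conj', ofReal_pow]
    ring
  rw [hexpand, sub_re, re_ofReal_mul, re_ofReal_mul, add_re, re_ofReal_mul]
  ring

theorem ofReal_add_ne_zero_of_pos {lam : ℂ} {k c : ℝ}
    (h : 0 < (‖(k : ℂ) + lam‖ ^ 2 - c * k) * lam.re - c * (lam ^ 2).re) :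
    (k : ℂ) + lam ≠ 0 := by
  intro hw
  obtain rfl : lam = -k := eq_neg_of_add_eq_zero_right hw
  rw [hw, norm_zero] at h
  simp only [neg_re, ofReal_re, even_two, Even.neg_pow, ← ofReal_pow] at h
  linarith

end Complex

theorem stmt0_general (lam : ℂ) (η k ν : ℝ)
    (h28 : (‖(k : ℂ) + lam‖ ^ 2 - η * k * ν) * lam.re
        - η * ν * (lam ^ 2).re > 0)
    (hne : (k : ℂ) + lam - (η : ℂ) * (ν : ℂ) ≠ 0) :
    0 < (lam * (1 - (η : ℂ) * (ν : ℂ) / ((k : ℂ) + lam))⁻¹).re := by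
  have h28' : 0 < (‖(k : ℂ) + lam‖ ^ 2 - η * ν * k) * lam.re - η * ν * (lam ^ 2).re := by
    linarith [mul_right_comm η k ν]
  rw [← Complex.ofReal_mul] at hne ⊢
  rw [Complex.mul_inv_one_sub_div _ _ (Complex.ofReal_add_ne_zero_of_pos h28'),
    Complex.re_div_eq_re_mul_conj_div_normSq, Complex.re_mul_add_mul_conj_add_sub]
  exact div_pos h28' (Complex.normSq_pos.mpr hne)

theorem stmt0 (lam : ℂ) (η k ν : ℝ) (hlam : lam.re < 0)
    (hη : 0 < η) (hk : 0 < k) (hν : 0 < ν)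
    (h28 : (‖(k : ℂ) + lam‖ ^ 2 - η * k * ν) * lam.re
        - η * ν * (lam ^ 2).re > 0)
    (hne : (k : ℂ) + lam - (η : ℂ) * (ν : ℂ) ≠ 0) :
    0 < (lam * (1 - (η : ℂ) * (ν : ℂ) / ((k : ℂ) + lam))⁻¹).re :=
  stmt0_general lam η k ν h28 hne
end

section
/- Let ν > 0, k ∈ ℤ \ {0}, λ ∈ ℂ with Re λ ≤ 0, U : [0,1] → ℝ continuous, and let W : [0,1] → ℂ be twice continuously differentiable with W(0) = W(1) = 0 and −ν W''(y) + (νk² + ikU(y) − λ) W(y) = 0 for all y ∈ [0,1]. Then W ≡ 0. -/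
/-!
Writing the equation as `ν W'' = c W` with `Re c = ν k² - Re λ ≥ 0` gives `⟪W, W''⟫_ℝ ≥ 0`
pointwise. Hence `(‖W‖²)'' = 2 ‖W'‖² + 2 ⟪W, W''⟫_ℝ ≥ 0`, so `‖W‖²` is convex on `[0, 1]`; it
vanishes at both endpoints, hence everywhere. This is the pointwise form of the energy identity
obtained by multiplying by `W̄` and integrating.
-/

open Set
open scoped RealInnerProductSpace

section InnerProductSpace

variable {E : Type*} [NormedAddCommGroup E] [InnerProductSpace ℝ E] {f : ℝ → E} {a b x : ℝ}

theorem iteratedDerivWithin_two_Icc_eq (hf : ContDiffOn ℝ 2 f (Icc a b)) (hx : x ∈ Ioo a b) :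
    iteratedDerivWithin 2 f (Icc a b) x = deriv (deriv f) x := by
  rw [iteratedDerivWithin_eq_iteratedDeriv (uniqueDiffOn_Icc (hx.1.trans hx.2))
      (hf.contDiffAt (Icc_mem_nhds hx.1 hx.2)) (Ioo_subset_Icc_self hx),
    iteratedDeriv_succ, iteratedDeriv_one]

theorem convexOn_norm_sq_of_inner_iteratedDerivWithin_nonneg (hf : ContDiffOn ℝ 2 f (Icc a b))
    (h : ∀ x ∈ Ioo a b, 0 ≤ ⟪f x, iteratedDerivWithin 2 f (Icc a b) x⟫) :
    ConvexOn ℝ (Icc a b) (fun t ↦ ‖f t‖ ^ 2) := by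
  have hf' : ContDiffOn ℝ 2 f (Ioo a b) := hf.mono Ioo_subset_Icc_self
  have hd : ∀ x ∈ Ioo a b, HasDerivAt f (deriv f x) x := fun x hx ↦
    ((hf'.differentiableOn two_ne_zero).differentiableAt (isOpen_Ioo.mem_nhds hx)).hasDerivAt
  have hdd : ∀ x ∈ Ioo a b, HasDerivAt (deriv f) (deriv (deriv f) x) x := fun x hx ↦
    (((hf'.deriv_of_isOpen isOpen_Ioo (by norm_num)).differentiableOn one_ne_zero).differentiableAt
      (isOpen_Ioo.mem_nhds hx)).hasDerivAt
  refine convexOn_of_hasDerivWithinAt2_nonneg (convex_Icc a b)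
    ((continuous_norm.comp_continuousOn hf.continuousOn).pow 2)
    (f' := fun t ↦ 2 * ⟪f t, deriv f t⟫)
    (f'' := fun t ↦ 2 * (⟪f t, deriv (deriv f) t⟫ + ⟪deriv f t, deriv f t⟫)) ?_ ?_ ?_
  all_goals rw [interior_Icc]; intro x hx
  · exact (hd x hx).norm_sq.hasDerivWithinAt
  · exact (((hd x hx).inner ℝ (hdd x hx)).const_mul 2).hasDerivWithinAt
  · have hW'' := h x hx
    rw [iteratedDerivWithin_two_Icc_eq hf hx] at hW''
    have hW' := real_inner_self_nonneg (x := deriv f x)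
    positivity

theorem eqOn_zero_of_inner_iteratedDerivWithin_nonneg (hf : ContDiffOn ℝ 2 f (Icc a b))
    (h : ∀ x ∈ Ioo a b, 0 ≤ ⟪f x, iteratedDerivWithin 2 f (Icc a b) x⟫)
    (ha : f a = 0) (hb : f b = 0) : EqOn f 0 (Icc a b) := by
  intro y hy
  have hab : a ≤ b := hy.1.trans hy.2
  have := (convexOn_norm_sq_of_inner_iteratedDerivWithin_nonneg hf h).le_max_of_mem_Icc
    (left_mem_Icc.2 hab) (right_mem_Icc.2 hab) hy
  simpa [ha, hb] using this

end InnerProductSpace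

theorem Complex.real_inner_mul_self_right (c w : ℂ) : ⟪w, c * w⟫ = c.re * ‖w‖ ^ 2 := by
  rw [Complex.inner, mul_assoc, Complex.mul_conj, Complex.normSq_eq_norm_sq]
  exact_mod_cast Complex.re_mul_ofReal _ _

theorem stmt9_general (ν : ℝ) (hν : 0 < ν) (k : ℤ)
    (lam : ℂ) (hlam : lam.re ≤ 0)
    (U : ℝ → ℝ)
    (W : ℝ → ℂ) (hW : ContDiffOn ℝ 2 W (Set.Icc 0 1))
    (hb0 : W 0 = 0) (hb1 : W 1 = 0)
    (hode : ∀ y ∈ Set.Icc (0 : ℝ) 1,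
      -(ν : ℂ) * iteratedDerivWithin 2 W (Set.Icc 0 1) y
        + ((ν : ℂ) * (k : ℂ) ^ 2 + Complex.I * (k : ℂ) * (U y : ℂ) - lam) * W y
        = 0) :
    ∀ y ∈ Set.Icc (0 : ℝ) 1, W y = 0 := by
  refine eqOn_zero_of_inner_iteratedDerivWithin_nonneg hW (fun x hx ↦ ?_) hb0 hb1
  set c : ℂ := ν * k ^ 2 + Complex.I * k * U x - lam
  have hW'' : (ν : ℂ) * iteratedDerivWithin 2 W (Icc 0 1) x = c * W x := by
    linear_combination -hode x (Ioo_subset_Icc_self hx)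
  have hc : 0 ≤ c.re := by
    have hre : c.re = ν * (k : ℝ) ^ 2 - lam.re := by simp [c, sq]
    rw [hre]
    nlinarith [sq_nonneg (k : ℝ)]
  have hνinner : 0 ≤ ν * ⟪W x, iteratedDerivWithin 2 W (Icc 0 1) x⟫ := by
    rw [← real_inner_smul_right, Complex.real_smul, hW'', Complex.real_inner_mul_self_right]
    positivity
  exact nonneg_of_mul_nonneg_right hνinner hν

theorem stmt9 (ν : ℝ) (hν : 0 < ν) (k : ℤ) (hk : k ≠ 0)
    (lam : ℂ) (hlam : lam.re ≤ 0)
    (U : ℝ → ℝ) (hU : ContinuousOn U (Set.Icc 0 1))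
    (W : ℝ → ℂ) (hW : ContDiffOn ℝ 2 W (Set.Icc 0 1))
    (hb0 : W 0 = 0) (hb1 : W 1 = 0)
    (hode : ∀ y ∈ Set.Icc (0 : ℝ) 1,
      -(ν : ℂ) * iteratedDerivWithin 2 W (Set.Icc 0 1) y
        + ((ν : ℂ) * (k : ℂ) ^ 2 + Complex.I * (k : ℂ) * (U y : ℂ) - lam) * W y
        = 0) :
    ∀ y ∈ Set.Icc (0 : ℝ) 1, W y = 0 :=
  stmt9_general ν hν k lam hlam U W hW hb0 hb1 hode
end
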